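/- arXiv:1211.3693 — 11 statements merged into one kernel-verified Lean document; each statement's English description precedes it below -/
import Mathlib

section
/- Let S be a numerical semigroup, let E ⊆ S be an ideal of S, and let b ∈ S be an odd integer. Then the numerical duplication S⋈ᵇE = 2·S ∪ (2·E + b) is a numerical semigroup, and moreover S = {x ∈ ℕ : 2x ∈ S⋈ᵇE}, i.e. S is one half of S⋈ᵇE. -/
open Set

/-- A numerical semigroup: an additive submonoid of ℕ (viewed inside ℤ)
with finite complement in ℕ. -/
def IsNumericalSemigroup (S : Set ℤ) : Prop :=
  0 ∈ S ∧ (∀ x ∈ S, ∀ y ∈ S, x + y ∈ S) ∧ (∀ x ∈ S, 0 ≤ x) ∧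
    ({z : ℤ | 0 ≤ z} \ S).Finite

/-- The Frobenius number of a set `X ⊆ ℤ`: the largest integer not in `X`. -/
noncomputable def frobNum (X : Set ℤ) : ℤ := sSup {z : ℤ | z ∉ X}

/-- The genus of a numerical semigroup: the number of gaps. -/
noncomputable def genus (S : Set ℤ) : ℕ := ({z : ℤ | 0 ≤ z} \ S).ncard

/-- `E` is an ideal of `S`: a nonempty subset of `S` closed under adding elements of `S`. -/
def IsIdealOf (S E : Set ℤ) : Prop :=
  E.Nonempty ∧ E ⊆ S ∧ ∀ e ∈ E, ∀ s ∈ S, e + s ∈ E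

/-- `E` is a relative ideal of `S`. -/
def IsRelIdealOf (S E : Set ℤ) : Prop :=
  E.Nonempty ∧ (∀ e ∈ E, ∀ s ∈ S, e + s ∈ E) ∧ ∃ s ∈ S, ∀ e ∈ E, s + e ∈ S

/-- The difference of two subsets of ℤ: `F − G = {z : z + G ⊆ F}`. -/
def setSub (F G : Set ℤ) : Set ℤ := {z : ℤ | ∀ g ∈ G, z + g ∈ F}

/-- The standard canonical ideal `K(S) = {x : f(S) − x ∉ S}`. -/
def stdCanonical (S : Set ℤ) : Set ℤ := {x : ℤ | frobNum S - x ∉ S}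

/-- The maximal ideal `M(S) = S ∖ {0}`. -/
def maxIdeal (S : Set ℤ) : Set ℤ := S \ {0}

/-- The type of a numerical semigroup: `t(S) = |(M−M) ∖ S|`. -/
noncomputable def typeNS (S : Set ℤ) : ℕ :=
  ((setSub (maxIdeal S) (maxIdeal S)) \ S).ncard

/-- The numerical duplication `S ⋈^b E = 2·S ∪ (2·E + b)`. -/
def dup (S E : Set ℤ) (b : ℤ) : Set ℤ :=
  (fun x => 2 * x) '' S ∪ (fun x => 2 * x + b) '' E

/-- The minimum of a (relative) ideal. -/
noncomputable def minE (E : Set ℤ) : ℤ := sInf E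

/-- The genus of a relative ideal:
`g(E) = |{x ∈ ℤ∖E : m(E) ≤ x ≤ f(E)}|`. -/
noncomputable def idealGenus (E : Set ℤ) : ℕ :=
  {x : ℤ | x ∉ E ∧ minE E ≤ x ∧ x ≤ frobNum E}.ncard

/-- The normalization `Ẽ = E + (f(S) − f(E))` of a (relative) ideal `E` of `S`. -/
def tilde (S E : Set ℤ) : Set ℤ := (fun e => e + (frobNum S - frobNum E)) '' E

/-- `S` is symmetric: `z ∈ S ↔ f(S) − z ∉ S`. -/
def IsSymmetric (S : Set ℤ) : Prop := ∀ z : ℤ, z ∈ S ↔ frobNum S - z ∉ S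

/-- `S` is almost symmetric: `K(S) + M(S) ⊆ M(S)`. -/
def IsAlmostSymmetric (S : Set ℤ) : Prop :=
  ∀ k ∈ stdCanonical S, ∀ m ∈ maxIdeal S, k + m ∈ maxIdeal S

/-- The numerical duplication is a numerical semigroup and `S` is one half of it. -/
theorem duplication_is_numerical_semigroup_and_one_half
    (S E : Set ℤ) (b : ℤ)
    (hS : IsNumericalSemigroup S) (hE : IsIdealOf S E)
    (hb : b ∈ S) (hbodd : Odd b) :
    IsNumericalSemigroup (dup S E b) ∧
      S = {x : ℤ | 0 ≤ x ∧ 2 * x ∈ dup S E b} := by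

  obtain ⟨hS0, hSadd, hSnn, hSfin⟩ := hS
  obtain ⟨⟨e0, he0⟩, hES, hEadd⟩ := hE
  have hb0 : 0 ≤ b := hSnn b hb
  have he0nn : 0 ≤ e0 := hSnn e0 (hES he0)
  obtain ⟨N0, hN0⟩ := hSfin.bddAbove
  set N : ℤ := max N0 0 with hNdef
  have hN0le : 0 ≤ N := le_max_right _ _
  have hNmem : ∀ z : ℤ, 0 ≤ z → N < z → z ∈ S := by
    intro z hz hNz
    by_contra h
    have := hN0 ⟨hz, h⟩
    have : z ≤ N := le_trans this (le_max_left _ _)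
    omega
  obtain ⟨c, hc⟩ := hbodd
  constructor
  · refine ⟨Or.inl ⟨0, hS0, by ring⟩, ?_, ?_, ?_⟩
    · rintro x hx y hy
      rcases hx with ⟨s, hs, rfl⟩ | ⟨e, he, rfl⟩ <;>
        rcases hy with ⟨t, ht, rfl⟩ | ⟨f, hf, rfl⟩
      · exact Or.inl ⟨s + t, hSadd s hs t ht, by ring⟩
      · exact Or.inr ⟨f + s, hEadd f hf s hs, by ring⟩
      · exact Or.inr ⟨e + t, hEadd e he t ht, by ring⟩
      · exact Or.inl ⟨e + f + b,
          hSadd _ (hES (hEadd e he f (hES hf))) b hb, by ring⟩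
    · rintro x (⟨s, hs, rfl⟩ | ⟨e, he, rfl⟩)
      · have := hSnn s hs; show (0:ℤ) ≤ 2 * s; linarith
      · have := hSnn e (hES he); show (0:ℤ) ≤ 2 * e + b; linarith
    · apply Set.Finite.subset (Set.finite_Icc 0 (2 * (e0 + N) + b + 2))
      rintro z ⟨hz0, hz⟩
      refine ⟨hz0, ?_⟩
      by_contra h
      push_neg at h
      apply hz
      rcases Int.even_or_odd z with ⟨m, hm⟩ | ⟨m, hm⟩
      · exact Or.inl ⟨m, hNmem m (by omega) (by omega), by show 2 * m = z; omega⟩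
      · refine Or.inr ⟨m - c, ?_, by show 2 * (m - c) + b = z; omega⟩
        have h1 : m - c - e0 ∈ S := hNmem _ (by omega) (by omega)
        have h2 := hEadd e0 he0 _ h1
        have h3 : e0 + (m - c - e0) = m - c := by ring
        rwa [h3] at h2
  · ext x
    simp only [Set.mem_setOf_eq]
    constructor
    · intro hx; exact ⟨hSnn x hx, Or.inl ⟨x, hx, rfl⟩⟩
    · rintro ⟨hx0, ⟨s, hs, h⟩ | ⟨e, he, h⟩⟩
      · have : x = s := by simp only [] at h; omega
        exact this ▸ hs
      · exfalso; simp only [] at h; omega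
end

section
/- Let S be a numerical semigroup, E ⊆ S an ideal of S, and b ∈ S an odd integer. Then the Frobenius number of the numerical duplication satisfies f(S⋈ᵇE) = 2f(E) + b. -/
open Set

/-- The Frobenius number of the numerical duplication is `2f(E) + b`. -/
theorem frobenius_of_duplication
    (S E : Set ℤ) (b : ℤ)
    (hS : IsNumericalSemigroup S) (hE : IsIdealOf S E)
    (hb : b ∈ S) (hbodd : Odd b) :
    frobNum (dup S E b) = 2 * frobNum E + b := by
  obtain ⟨hS0, hSadd, hSpos, hSfin⟩ := hS
  obtain ⟨⟨e₀, he₀⟩, hES, hEadd⟩ := hE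
  obtain ⟨c, hc⟩ := hSfin.bddAbove
  have hScompl : ∀ z : ℤ, max c 0 < z → z ∈ S := by
    intro z hz
    by_contra h
    have hm : z ∈ ({z : ℤ | 0 ≤ z} \ S) := ⟨by simp only [Set.mem_setOf_eq]; omega, h⟩
    have := hc hm
    omega
  have hEne : {z : ℤ | z ∉ E}.Nonempty :=
    ⟨-1, fun h => by have := hSpos _ (hES h); omega⟩
  have hEbdd : BddAbove {z : ℤ | z ∉ E} := by
    refine ⟨e₀ + max c 0 + 1, fun z hz => ?_⟩
    by_contra h
    push_neg at h
    have hzS : z - e₀ ∈ S := hScompl _ (by omega)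
    have hzE := hEadd e₀ he₀ _ hzS
    have hzeq : e₀ + (z - e₀) = z := by ring
    rw [hzeq] at hzE
    exact hz hzE
  have hFE : frobNum E ∉ E := Int.csSup_mem hEne hEbdd
  have hFEgt : ∀ z : ℤ, frobNum E < z → z ∈ E := by
    intro z hz
    by_contra h
    have := le_csSup hEbdd (show z ∈ {z : ℤ | z ∉ E} from h)
    simp only [frobNum] at hz
    omega
  obtain ⟨k, hk⟩ := hbodd
  have hb1 : 1 ≤ b := by have := hSpos b hb; omega
  have hmem : 2 * frobNum E + b ∉ dup S E b := by
    rintro (⟨s, hs, heq⟩ | ⟨e, he, heq⟩)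
    · simp only at heq; omega
    · simp only at heq
      have he' : e = frobNum E := by omega
      exact hFE (he' ▸ he)
  have hub : ∀ z : ℤ, 2 * frobNum E + b < z → z ∈ dup S E b := by
    intro z hz
    rcases Int.even_or_odd z with ⟨x, hx⟩ | ⟨x, hx⟩
    · left; exact ⟨x, hES (hFEgt x (by omega)), by simp only; omega⟩
    · right; exact ⟨x - k, hFEgt _ (by omega), by simp only; omega⟩
  have hgreat : IsGreatest {z : ℤ | z ∉ dup S E b} (2 * frobNum E + b) := by
    constructor
    · exact hmem
    · intro z hz
      by_contra h
      exact hz (hub z (by omega))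
  exact hgreat.csSup_eq
end

section
/- Let S be a numerical semigroup, E ⊆ S an ideal of S, and b ∈ S an odd integer. Then the genus of the numerical duplication satisfies g(S⋈ᵇE) = g(S) + g(E) + m(E) + (b−1)/2. -/
open Set

/-- The genus of the numerical duplication is `g(S) + g(E) + m(E) + (b-1)/2`. -/
theorem genus_of_duplication
    (S E : Set ℤ) (b : ℤ)
    (hS : IsNumericalSemigroup S) (hE : IsIdealOf S E)
    (hb : b ∈ S) (hbodd : Odd b) :
    (genus (dup S E b) : ℤ) =
      (genus S : ℤ) + (idealGenus E : ℤ) + minE E + (b - 1) / 2 := by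
  obtain ⟨hS0, hSadd, hSnn, hSfin⟩ := hS
  obtain ⟨⟨e0, he0⟩, hES, hEadd⟩ := hE
  obtain ⟨k, hk⟩ := hbodd
  have hbnn : 0 ≤ b := hSnn b hb
  have hknn : 0 ≤ k := by omega
  have hEnn : ∀ e ∈ E, 0 ≤ e := fun e he => hSnn e (hES he)
  have hEbdd : BddBelow E := ⟨0, fun e he => hEnn e he⟩
  have hEne : E.Nonempty := ⟨e0, he0⟩
  have hmE : minE E ∈ E := Int.csInf_mem hEne hEbdd
  have hm0 : 0 ≤ minE E := hEnn _ hmE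
  have hmmin : ∀ t ∈ E, minE E ≤ t := fun t ht => csInf_le hEbdd ht
  have hCbdd : BddAbove {z : ℤ | z ∉ E} := by
    obtain ⟨G, hG⟩ := hSfin.bddAbove
    refine ⟨e0 + max G 0, fun t ht => ?_⟩
    by_contra hlt
    push_neg at hlt
    have hts : t - e0 ∈ S := by
      by_contra hns
      have hmem : t - e0 ∈ {z : ℤ | 0 ≤ z} \ S := ⟨by simp only [Set.mem_setOf_eq]; omega, hns⟩
      have := hG hmem
      omega
    have h2 := hEadd e0 he0 (t - e0) hts
    rw [show e0 + (t - e0) = t by ring] at h2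
    exact ht h2
  have hfE : ∀ t, t ∉ E → t ≤ frobNum E := fun t ht => le_csSup hCbdd ht
  set Gs : Set ℤ := {x : ℤ | 0 ≤ x ∧ x ∉ S} with hGs
  set GE : Set ℤ := {x : ℤ | x ∉ E ∧ minE E ≤ x ∧ x ≤ frobNum E} with hGE
  set T : Set ℤ := {t : ℤ | -k ≤ t ∧ t ∉ E} with hT
  have hGs_eq : {z : ℤ | 0 ≤ z} \ S = Gs := by
    ext x; simp [hGs, Set.mem_diff]
  have key : {z : ℤ | 0 ≤ z} \ dup S E b =
      ((fun x => 2 * x) '' Gs) ∪ ((fun t => 2 * t + b) '' T) := by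
    ext z
    simp only [Set.mem_diff, Set.mem_setOf_eq, dup, Set.mem_union, Set.mem_image, hGs, hT]
    constructor
    · rintro ⟨hz0, hzd⟩
      rcases Int.even_or_odd z with ⟨x, hx⟩ | ⟨x, hx⟩
      · left
        refine ⟨x, ⟨by omega, fun hxS => hzd (Or.inl ⟨x, hxS, by omega⟩)⟩, by omega⟩
      · right
        refine ⟨x - k, ⟨by omega, fun hE' => hzd (Or.inr ⟨x - k, hE', by omega⟩)⟩, by omega⟩
    · rintro (⟨x, ⟨hx0, hxS⟩, hxe⟩ | ⟨t, ⟨ht0, htE⟩, hte⟩)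
      · refine ⟨by omega, ?_⟩
        rintro (⟨s, hs, hs2⟩ | ⟨t, _, ht2⟩)
        · have hsx : s = x := by omega
          exact hxS (hsx ▸ hs)
        · omega
      · refine ⟨by omega, ?_⟩
        rintro (⟨s, _, hs2⟩ | ⟨t', ht', ht2⟩)
        · omega
        · have htt : t' = t := by omega
          exact htE (htt ▸ ht')
  have hT_eq : T = Set.Ico (-k) (minE E) ∪ GE := by
    ext t
    simp only [hT, hGE, Set.mem_setOf_eq, Set.mem_union, Set.mem_Ico]
    constructor
    · rintro ⟨h1, h2⟩
      rcases lt_or_ge t (minE E) with h | h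
      · exact Or.inl ⟨h1, h⟩
      · exact Or.inr ⟨h2, h, hfE t h2⟩
    · rintro (⟨h1, h2⟩ | ⟨h1, h2, _⟩)
      · exact ⟨h1, fun hEt => absurd (hmmin t hEt) (by omega)⟩
      · exact ⟨by omega, h1⟩
  have hGsfin : Gs.Finite := hGs_eq ▸ hSfin
  have hGEfin : GE.Finite :=
    (Set.finite_Icc (minE E) (frobNum E)).subset (fun x hx => ⟨hx.2.1, hx.2.2⟩)
  have hTfin : T.Finite := by
    rw [hT_eq]; exact (Set.finite_Ico _ _).union hGEfin
  have hinj2 : Function.Injective (fun x : ℤ => 2 * x) := fun a c h => by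
    have : 2 * a = 2 * c := h; omega
  have hinjb : Function.Injective (fun t : ℤ => 2 * t + b) := fun a c h => by
    have : 2 * a + b = 2 * c + b := h; omega
  have hdisj : Disjoint ((fun x => 2 * x) '' Gs) ((fun t => 2 * t + b) '' T) := by
    rw [Set.disjoint_left]
    rintro z ⟨x, _, rfl⟩ ⟨t, _, h⟩
    simp only at h
    omega
  have hdisj2 : Disjoint (Set.Ico (-k) (minE E)) GE := by
    rw [Set.disjoint_left]
    rintro t ht1 ht2
    exact absurd ht2.2.1 (by simp only [Set.mem_Ico] at ht1; omega)
  have hIco : (Set.Ico (-k) (minE E)).ncard = (minE E + k).toNat := by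
    rw [← Finset.coe_Ico, Set.ncard_coe_finset, Int.card_Ico]
    omega
  have hcard : genus (dup S E b) = Gs.ncard + ((minE E + k).toNat + GE.ncard) := by
    unfold genus
    rw [key, Set.ncard_union_eq hdisj (hGsfin.image _) (hTfin.image _),
      Set.ncard_image_of_injective _ hinj2, Set.ncard_image_of_injective _ hinjb,
      hT_eq, Set.ncard_union_eq hdisj2 (Set.finite_Ico _ _) hGEfin, hIco]
  have hgenS : genus S = Gs.ncard := by unfold genus; rw [hGs_eq]
  have hgenE : idealGenus E = GE.ncard := by unfold idealGenus; rw [hGE]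
  rw [hcard, hgenS, hgenE]
  push_cast
  omega
end

section
/- Let S be a numerical semigroup, E ⊆ S an ideal of S, and b ∈ S an odd integer. Then the numerical duplication S⋈ᵇE is symmetric if and only if E is a canonical ideal of S, i.e. E is a ℤ-translate of the standard canonical ideal K(S). -/
open Set

lemma frob_spec (X : Set ℤ) (hne : ∃ z : ℤ, z ∉ X) (B : ℤ)
    (hB : ∀ z : ℤ, z ∉ X → z ≤ B) :
    frobNum X ∉ X ∧ ∀ z : ℤ, frobNum X < z → z ∈ X := by
  have hCne : {z : ℤ | z ∉ X}.Nonempty := hne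
  have hbdd : BddAbove {z : ℤ | z ∉ X} := ⟨B, fun z hz => hB z hz⟩
  have hmem : frobNum X ∈ {z : ℤ | z ∉ X} := Int.csSup_mem hCne hbdd
  refine ⟨hmem, fun z hz => ?_⟩
  by_contra h
  exact absurd (le_csSup hbdd h) (not_le.mpr hz)

lemma frob_eq (X : Set ℤ) (F : ℤ) (hF : F ∉ X) (h : ∀ z : ℤ, F < z → z ∈ X) :
    frobNum X = F := by
  have hub : ∀ z ∈ {z : ℤ | z ∉ X}, z ≤ F := by
    intro z hz
    by_contra hzF
    exact hz (h z (not_le.mp hzF))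
  apply le_antisymm
  · exact csSup_le ⟨F, hF⟩ hub
  · exact le_csSup ⟨F, hub⟩ hF

/-- The numerical duplication is symmetric iff `E` is a canonical ideal of `S`,
i.e. a translate of the standard canonical ideal `K(S)`. -/
theorem duplication_symmetric_iff_canonical
    (S E : Set ℤ) (b : ℤ)
    (hS : IsNumericalSemigroup S) (hE : IsIdealOf S E)
    (hb : b ∈ S) (hbodd : Odd b) :
    IsSymmetric (dup S E b) ↔
      ∃ x : ℤ, E = (fun k => x + k) '' stdCanonical S := by
  classical
  obtain ⟨h0, hadd, hpos, hfin⟩ := hS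
  obtain ⟨⟨e, he⟩, hES, hEadd⟩ := hE
  obtain ⟨c, hc⟩ := hbodd
  have hb0 : 0 ≤ b := hpos b hb
  obtain ⟨N, hN⟩ := hfin.bddAbove
  have hSB : ∀ z : ℤ, z ∉ S → z ≤ max N 0 := by
    intro z hz
    rcases le_or_gt 0 z with h | h
    · exact le_trans (hN ⟨h, hz⟩) (le_max_left _ _)
    · omega
  have hSne : (-1 : ℤ) ∉ S := fun h => by have := hpos _ h; omega
  obtain ⟨hfS1, hfS2⟩ := frob_spec S ⟨-1, hSne⟩ (max N 0) hSB
  have hEB : ∀ z : ℤ, z ∉ E → z ≤ e + frobNum S := by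
    intro z hz
    by_contra h
    push_neg at h
    have h1 : z - e ∈ S := hfS2 _ (by omega)
    have h2 := hEadd e he _ h1
    rw [show e + (z - e) = z from by ring] at h2
    exact hz h2
  obtain ⟨hfE1, hfE2⟩ := frob_spec E ⟨-1, fun h => hSne (hES h)⟩ (e + frobNum S) hEB
  have hfSfE : frobNum S ≤ frobNum E := by
    by_contra h
    exact hfS1 (hES (hfE2 (frobNum S) (by omega)))
  have hmemD : ∀ z : ℤ, z ∈ dup S E b ↔
      (∃ s, s ∈ S ∧ z = 2 * s) ∨ (∃ t, t ∈ E ∧ z = 2 * t + b) := by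
    intro z
    simp only [dup, Set.mem_union, Set.mem_image]
    constructor
    · rintro (⟨s, hs, rfl⟩ | ⟨t, ht, rfl⟩)
      exacts [Or.inl ⟨s, hs, rfl⟩, Or.inr ⟨t, ht, rfl⟩]
    · rintro (⟨s, hs, rfl⟩ | ⟨t, ht, rfl⟩)
      exacts [Or.inl ⟨s, hs, rfl⟩, Or.inr ⟨t, ht, rfl⟩]
  have hfD : frobNum (dup S E b) = 2 * frobNum E + b := by
    apply frob_eq
    · rw [hmemD]
      rintro (⟨s, hs, hsz⟩ | ⟨t, ht, htz⟩)
      · omega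
      · have ht' : t = frobNum E := by omega
        exact hfE1 (ht' ▸ ht)
    · intro z hz
      rw [hmemD]
      rcases Int.even_or_odd z with ⟨w, hw⟩ | ⟨w, hw⟩
      · exact Or.inl ⟨w, hfS2 w (by omega), by omega⟩
      · exact Or.inr ⟨w - c, hfE2 _ (by omega), by omega⟩
  constructor
  · intro hsym
    refine ⟨frobNum E - frobNum S, ?_⟩
    have key : ∀ z : ℤ, z ∈ E ↔ frobNum E - z ∉ S := by
      intro z
      have h1 := hsym (2 * z + b)
      rw [hfD, hmemD, hmemD] at h1
      constructor
      · intro hzE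
        have h3 := h1.mp (Or.inr ⟨z, hzE, rfl⟩)
        intro hcon
        exact h3 (Or.inl ⟨frobNum E - z, hcon, by ring⟩)
      · intro hnot
        have h4 : ¬((∃ s, s ∈ S ∧ 2 * frobNum E + b - (2 * z + b) = 2 * s) ∨
            (∃ t, t ∈ E ∧ 2 * frobNum E + b - (2 * z + b) = 2 * t + b)) := by
          rintro (⟨s, hs, hsz⟩ | ⟨t, ht, htz⟩)
          · have hse : s = frobNum E - z := by omega
            exact hnot (hse ▸ hs)
          · omega
        rcases h1.mpr h4 with ⟨s, hs, hsz⟩ | ⟨t, ht, htz⟩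
        · omega
        · have htz' : t = z := by omega
          exact htz' ▸ ht
    ext z
    simp only [Set.mem_image, stdCanonical, Set.mem_setOf_eq]
    rw [key z]
    constructor
    · intro h
      refine ⟨z - (frobNum E - frobNum S), ?_, by ring⟩
      rw [show frobNum S - (z - (frobNum E - frobNum S)) = frobNum E - z from by ring]
      exact h
    · rintro ⟨k, hk, rfl⟩
      rw [show frobNum E - (frobNum E - frobNum S + k) = frobNum S - k from by ring]
      exact hk
  · rintro ⟨x, hx⟩
    have hEK : ∀ z : ℤ, z ∈ E ↔ frobNum S - (z - x) ∉ S := by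
      intro z
      rw [hx]
      simp only [Set.mem_image, stdCanonical, Set.mem_setOf_eq]
      constructor
      · rintro ⟨k, hk, rfl⟩
        rw [show frobNum S - (x + k - x) = frobNum S - k from by ring]
        exact hk
      · intro h
        exact ⟨z - x, h, by ring⟩
    have hfEx : frobNum E = x + frobNum S := by
      apply frob_eq
      · intro h
        have h2 := (hEK _).mp h
        rw [show frobNum S - (x + frobNum S - x) = 0 from by ring] at h2
        exact h2 h0
      · intro z hz
        rw [hEK]
        intro hmem
        have := hpos _ hmem
        omega
    intro z
    rw [hfD, hmemD, hmemD]
    rcases Int.even_or_odd z with ⟨w, hw⟩ | ⟨w, hw⟩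
    · subst hw
      constructor
      · rintro (⟨s, hs, hsz⟩ | ⟨t, ht, htz⟩)
        · rintro (⟨s', hs', h1⟩ | ⟨t', ht', h2⟩)
          · omega
          · have h3 := (hEK t').mp ht'
            rw [show frobNum S - (t' - x) = s from by omega] at h3
            exact h3 hs
        · exact absurd htz (by omega)
      · intro hR
        left
        refine ⟨w, ?_, by ring⟩
        by_contra hwS
        apply hR
        right
        refine ⟨frobNum E - w, ?_, by omega⟩
        rw [hEK]
        rw [show frobNum S - (frobNum E - w - x) = w from by omega]
        exact hwS
    · subst hw
      constructor
      · rintro (⟨s, hs, hsz⟩ | ⟨t, ht, htz⟩)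
        · exact absurd hsz (by omega)
        · rintro (⟨s', hs', h1⟩ | ⟨t', ht', h2⟩)
          · have h3 := (hEK t).mp ht
            rw [show frobNum S - (t - x) = s' from by omega] at h3
            exact h3 hs'
          · omega
      · intro hR
        right
        refine ⟨w - c, ?_, by omega⟩
        rw [hEK]
        intro hcon
        apply hR
        left
        exact ⟨frobNum S - (w - c - x), hcon, by omega⟩
end

section
/- Let S be a numerical semigroup and E a relative ideal of S, with normalization Ẽ = E + (f(S) − f(E)). Then f(S) + 1 − g(S) ≤ g(Ẽ) + m(Ẽ), and equality holds if and only if E is a canonical ideal of S, i.e. Ẽ = K(S). -/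
open Set

/-!
The normalized ideal `T = Ẽ` is a relative ideal with `f(T) = f(S) =: f`, hence `T ⊆ K(S)`:
if `x ∈ T` and `f - x ∈ S` then `f = x + (f - x) ∈ T`. Counting `[m(T), f]` gives
`g(T) + m(T) = f + 1 - |T ∩ (-∞, f]|`, while `x ↦ f - x` maps the gaps of `S` onto
`K(S) ∩ (-∞, f]`, so `|T ∩ (-∞, f]| ≤ g(S)`. Equality forces `T ∩ (-∞, f] = K(S) ∩ (-∞, f]`,
and both sets contain every integer above `f`.
-/

lemma eq_of_inter_Iic_eq {α : Type*} [LinearOrder α] {X Y : Set α} {a : α}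
    (hX : Ioi a ⊆ X) (hY : Ioi a ⊆ Y) (h : X ∩ Iic a = Y ∩ Iic a) : X = Y := by
  ext x
  rcases le_or_gt x a with hx | hx
  · simpa [hx] using Set.ext_iff.1 h x
  · exact iff_of_true (hX hx) (hY hx)

lemma stdCanonical_inter_Iic_frobNum (S : Set ℤ) :
    stdCanonical S ∩ Iic (frobNum S) = (frobNum S - ·) '' ({z : ℤ | 0 ≤ z} \ S) := by
  ext x
  simp only [stdCanonical, mem_inter_iff, mem_ofPred_eq, mem_Iic, mem_image, mem_sdiff]
  constructor
  · rintro ⟨hx, hxf⟩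
    exact ⟨frobNum S - x, ⟨by omega, hx⟩, by ring⟩
  · rintro ⟨z, ⟨hz, hzS⟩, rfl⟩
    exact ⟨by simpa using hzS, by omega⟩

lemma ncard_stdCanonical_inter_Iic_frobNum (S : Set ℤ) :
    (stdCanonical S ∩ Iic (frobNum S)).ncard = genus S := by
  rw [stdCanonical_inter_Iic_frobNum, genus]
  exact ncard_image_of_injective _ sub_right_injective

namespace IsNumericalSemigroup

variable {S : Set ℤ}

lemma nonneg (hS : IsNumericalSemigroup S) {x : ℤ} (hx : x ∈ S) : 0 ≤ x :=
  hS.2.2.1 x hx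

lemma bddAbove_compl (hS : IsNumericalSemigroup S) : BddAbove {z : ℤ | z ∉ S} := by
  obtain ⟨N, hN⟩ := hS.2.2.2.bddAbove
  refine ⟨max N 0, fun z hz => ?_⟩
  rcases le_or_gt 0 z with h | h
  · exact le_max_of_le_left (hN ⟨h, hz⟩)
  · exact le_max_of_le_right h.le

lemma finite_stdCanonical_inter_Iic_frobNum (hS : IsNumericalSemigroup S) :
    (stdCanonical S ∩ Iic (frobNum S)).Finite := by
  rw [stdCanonical_inter_Iic_frobNum]
  exact hS.2.2.2.image _

lemma Ioi_frobNum_subset_stdCanonical (hS : IsNumericalSemigroup S) :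
    Ioi (frobNum S) ⊆ stdCanonical S := fun z hz hzS => by
  have := hS.nonneg hzS
  have := mem_Ioi.1 hz
  omega

end IsNumericalSemigroup

namespace IsRelIdealOf

variable {S E : Set ℤ}

lemma bddBelow (hS : IsNumericalSemigroup S) (hE : IsRelIdealOf S E) : BddBelow E := by
  obtain ⟨s, -, hs⟩ := hE.2.2
  exact ⟨-s, fun e he => by have := hS.nonneg (hs e he); omega⟩

lemma bddAbove_compl (hS : IsNumericalSemigroup S) (hE : IsRelIdealOf S E) :
    BddAbove {z : ℤ | z ∉ E} := by
  obtain ⟨⟨e, he⟩, hadd, -⟩ := hE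
  obtain ⟨N, hN⟩ := hS.bddAbove_compl
  refine ⟨N + e, fun z hz => ?_⟩
  by_contra! hlt
  have hzS : z - e ∈ S := by
    by_contra h
    have := hN h
    omega
  exact hz (by simpa using hadd e he (z - e) hzS)

lemma isLeast_minE (hS : IsNumericalSemigroup S) (hE : IsRelIdealOf S E) :
    IsLeast E (minE E) :=
  ⟨Int.csInf_mem hE.1 (hE.bddBelow hS), fun _ he => csInf_le (hE.bddBelow hS) he⟩

lemma isGreatest_frobNum (hS : IsNumericalSemigroup S) (hE : IsRelIdealOf S E) :
    IsGreatest {z : ℤ | z ∉ E} (frobNum E) := by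
  obtain ⟨m, hm⟩ := hE.bddBelow hS
  have hne : {z : ℤ | z ∉ E}.Nonempty := ⟨m - 1, fun h => by have := hm h; omega⟩
  exact ⟨Int.csSup_mem hne (hE.bddAbove_compl hS),
    fun _ hz => le_csSup (hE.bddAbove_compl hS) hz⟩

lemma Ioi_frobNum_subset (hS : IsNumericalSemigroup S) (hE : IsRelIdealOf S E) :
    Ioi (frobNum E) ⊆ E := fun z hz => by
  by_contra h
  exact absurd ((hE.isGreatest_frobNum hS).2 h) (not_le.2 hz)

lemma minE_le_frobNum_add_one (hS : IsNumericalSemigroup S) (hE : IsRelIdealOf S E) :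
    minE E ≤ frobNum E + 1 :=
  (hE.isLeast_minE hS).2 (hE.Ioi_frobNum_subset hS (mem_Ioi.2 (lt_add_one _)))

lemma idealGenus_add_minE (hS : IsNumericalSemigroup S) (hE : IsRelIdealOf S E) :
    (idealGenus E : ℤ) + minE E = frobNum E + 1 - (E ∩ Iic (frobNum E)).ncard := by
  have hm := hE.minE_le_frobNum_add_one hS
  have hsub : E ∩ Iic (frobNum E) ⊆ Icc (minE E) (frobNum E) :=
    fun x ⟨hx, hxf⟩ => ⟨(hE.isLeast_minE hS).2 hx, hxf⟩
  have hgaps : {x : ℤ | x ∉ E ∧ minE E ≤ x ∧ x ≤ frobNum E} =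
      Icc (minE E) (frobNum E) \ (E ∩ Iic (frobNum E)) := by
    ext x
    simp only [mem_ofPred_eq, mem_sdiff, mem_Icc, mem_inter_iff, mem_Iic]
    tauto
  have hcount := ncard_sdiff_add_ncard_of_subset hsub (finite_Icc _ _)
  have hIcc : (Icc (minE E) (frobNum E)).ncard = (frobNum E + 1 - minE E).toNat := by
    rw [← Finset.coe_Icc, ncard_coe_finset, Int.card_Icc]
  rw [idealGenus, hgaps]
  omega

lemma subset_stdCanonical (hS : IsNumericalSemigroup S) (hE : IsRelIdealOf S E)
    (hf : frobNum E = frobNum S) : E ⊆ stdCanonical S := fun x hx hfx => by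
  have := hE.2.1 x hx _ hfx
  rw [add_sub_cancel, ← hf] at this
  exact (hE.isGreatest_frobNum hS).1 this

lemma image_add_right (hS : IsNumericalSemigroup S) (hE : IsRelIdealOf S E) (c : ℤ) :
    IsRelIdealOf S ((· + c) '' E) := by
  obtain ⟨hne, hadd, s, hs, hsE⟩ := hE
  obtain ⟨N, hN⟩ := hS.bddAbove_compl
  -- `t` and `t + c` both lie above every gap of `S`
  have hmem : ∀ z, N < z → z ∈ S := fun z hz => by
    by_contra h
    exact absurd (hN h) (not_le.2 hz)
  set t := N + |c| + 1
  have ht : t ∈ S := hmem t (by have := abs_nonneg c; omega)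
  have htc : t + c ∈ S := hmem _ (by have := neg_abs_le c; omega)
  refine ⟨hne.image _, ?_, s + t, hS.2.1 s hs t ht, ?_⟩
  · rintro _ ⟨e, he, rfl⟩ x hx
    exact ⟨e + x, hadd e he x hx, by ring⟩
  · rintro _ ⟨e, he, rfl⟩
    have := hS.2.1 _ (hsE e he) _ htc
    convert this using 1
    ring

lemma frobNum_image_add_right (hS : IsNumericalSemigroup S) (hE : IsRelIdealOf S E) (c : ℤ) :
    frobNum ((· + c) '' E) = frobNum E + c := by
  obtain ⟨hnot, hle⟩ := hE.isGreatest_frobNum hS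
  refine IsGreatest.csSup_eq ⟨?_, fun z hz => ?_⟩
  · simpa [Set.image_add_right] using hnot
  · have := hle (show z + -c ∉ E by simpa [Set.image_add_right] using hz)
    omega

lemma frobNum_tilde (hS : IsNumericalSemigroup S) (hE : IsRelIdealOf S E) :
    frobNum (tilde S E) = frobNum S := by
  rw [tilde, hE.frobNum_image_add_right hS]
  ring

end IsRelIdealOf

/-- `f(S) + 1 - g(S) ≤ g(Ẽ) + m(Ẽ)`, with equality iff `E` is a canonical
ideal of `S` (i.e. `Ẽ = K(S)`). -/
theorem genus_min_inequality_canonical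
    (S E : Set ℤ)
    (hS : IsNumericalSemigroup S) (hE : IsRelIdealOf S E) :
    frobNum S + 1 - (genus S : ℤ) ≤ (idealGenus (tilde S E) : ℤ) + minE (tilde S E) ∧
      (frobNum S + 1 - (genus S : ℤ) = (idealGenus (tilde S E) : ℤ) + minE (tilde S E) ↔
        tilde S E = stdCanonical S) := by
  set T := tilde S E
  have hT : IsRelIdealOf S T := hE.image_add_right hS _
  have hfT : frobNum T = frobNum S := hE.frobNum_tilde hS
  have hsub : T ∩ Iic (frobNum S) ⊆ stdCanonical S ∩ Iic (frobNum S) :=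
    inter_subset_inter_left _ (hT.subset_stdCanonical hS hfT)
  have hfin := hS.finite_stdCanonical_inter_Iic_frobNum
  rw [hT.idealGenus_add_minE hS, hfT, ← ncard_stdCanonical_inter_Iic_frobNum]
  refine ⟨by have := ncard_le_ncard hsub hfin; omega, fun h => ?_, fun h => by rw [h]⟩
  refine eq_of_inter_Iic_eq (hfT ▸ hT.Ioi_frobNum_subset hS)
    hS.Ioi_frobNum_subset_stdCanonical ?_
  exact eq_of_subset_of_ncard_le hsub (by omega) hfin
end

section
/- Let S be a numerical semigroup with maximal ideal M = S∖{0} and standard canonical ideal K = K(S), let E be an ideal of S with normalization Ẽ = E + (f(S) − f(E)). Assume K − (M−M) ⊆ Ẽ. Then for any integer x ∉ E, one has f(E) − x ∈ M − M. -/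
open Set

/-- If `K - (M-M) ⊆ Ẽ`, then for any `x ∉ E` one has `f(E) - x ∈ M - M`. -/
theorem frob_sub_mem_MsubM
    (S E : Set ℤ)
    (hS : IsNumericalSemigroup S) (hE : IsIdealOf S E)
    (h : setSub (stdCanonical S) (setSub (maxIdeal S) (maxIdeal S)) ⊆ tilde S E) :
    ∀ x : ℤ, x ∉ E → frobNum E - x ∈ setSub (maxIdeal S) (maxIdeal S) := by
  obtain ⟨h0, hadd, hpos, hfin⟩ := hS
  intro x hx
  have hz : x + (frobNum S - frobNum E) ∉ tilde S E := by
    rintro ⟨e, he, heq⟩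
    have : e = x := by simpa using heq
    exact hx (this ▸ he)
  have hnot : x + (frobNum S - frobNum E) ∉
      setSub (stdCanonical S) (setSub (maxIdeal S) (maxIdeal S)) :=
    fun hmem => hz (h hmem)
  simp only [setSub, Set.mem_setOf_eq, not_forall] at hnot
  obtain ⟨d, hd, hdK⟩ := hnot
  have hsS : frobNum E - x - d ∈ S := by
    have : frobNum S - (x + (frobNum S - frobNum E) + d) ∈ S := by
      simpa [stdCanonical] using hdK
    have heq : frobNum S - (x + (frobNum S - frobNum E) + d) = frobNum E - x - d := by ring
    rwa [heq] at this
  intro m hm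
  have hdm : d + m ∈ maxIdeal S := hd m hm
  obtain ⟨hdmS, hdm0⟩ := hdm
  have hdmpos : 0 < d + m := lt_of_le_of_ne (hpos _ hdmS) (Ne.symm hdm0)
  have hsum : frobNum E - x - d + (d + m) ∈ S := hadd _ hsS _ hdmS
  have heq2 : frobNum E - x - d + (d + m) = frobNum E - x + m := by ring
  rw [heq2] at hsum
  refine ⟨hsum, ?_⟩
  have := hpos _ hsS
  simp only [Set.mem_singleton_iff]
  intro hzero
  linarith
end

section
/- Let S be a numerical semigroup with maximal ideal M = S∖{0} and standard canonical ideal K = K(S), let E be an ideal of S with normalization Ẽ = E + (f(S) − f(E)). Assume K − (M−M) ⊆ Ẽ and that K − Ẽ is a numerical semigroup. Then for any integer x ∉ E, one has f(E) − x ∈ E − E. -/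
open Set

/-- If `K - (M-M) ⊆ Ẽ` and `K - Ẽ` is a numerical semigroup, then for any
`x ∉ E` one has `f(E) - x ∈ E - E`. -/
theorem frob_sub_mem_EsubE
    (S E : Set ℤ)
    (hS : IsNumericalSemigroup S) (hE : IsIdealOf S E)
    (h : setSub (stdCanonical S) (setSub (maxIdeal S) (maxIdeal S)) ⊆ tilde S E)
    (hK : IsNumericalSemigroup (setSub (stdCanonical S) (tilde S E))) :
    ∀ x : ℤ, x ∉ E → frobNum E - x ∈ setSub E E := by
  intro x hx e₀ he₀
  set T := setSub (stdCanonical S) (tilde S E) with hTdef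
  have hfK : frobNum S ∉ stdCanonical S := by
    simp only [stdCanonical, mem_setOf_eq, sub_self, not_not]
    exact hS.1
  -- key: easy direction of duality
  have key : ∀ w : ℤ, w ∉ tilde S E → frobNum S - w ∈ T := by
    intro w hw g hg
    obtain ⟨e, he, rfl⟩ := hg
    intro hs
    have h1 : w - (e + (frobNum S - frobNum E)) ∈ S := by
      have heq : frobNum S - (frobNum S - w + (e + (frobNum S - frobNum E)))
          = w - (e + (frobNum S - frobNum E)) := by ring
      rwa [heq] at hs
    apply hw
    refine ⟨e + (w - (e + (frobNum S - frobNum E))), hE.2.2 e he _ h1, by ring⟩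
  -- y := x + c is not in Ẽ
  have hy : x + (frobNum S - frobNum E) ∉ tilde S E := by
    rintro ⟨e, he, heq⟩
    simp only at heq
    have : e = x := by linarith
    exact hx (this ▸ he)
  have ht₀ : frobNum S - (x + (frobNum S - frobNum E)) ∈ T := key _ hy
  -- main step: w + t ∈ K for all t ∈ T, where w = (fE - x + e₀) + c
  have hw : ∀ t ∈ T,
      (frobNum E - x + e₀) + (frobNum S - frobNum E) + t ∈ stdCanonical S := by
    intro t ht
    intro hs
    have hs' : x - e₀ - t ∈ S := by
      have heq : frobNum S - ((frobNum E - x + e₀) + (frobNum S - frobNum E) + t)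
          = x - e₀ - t := by ring
      rwa [heq] at hs
    have hts : t + (x - e₀ - t) ∈ T := by
      intro g hg
      obtain ⟨e, he, rfl⟩ := hg
      have h1 : e + (x - e₀ - t) ∈ E := hE.2.2 e he _ hs'
      have h2 := ht (e + (x - e₀ - t) + (frobNum S - frobNum E)) ⟨_, h1, rfl⟩
      have heq : t + (x - e₀ - t) + (e + (frobNum S - frobNum E))
          = t + (e + (x - e₀ - t) + (frobNum S - frobNum E)) := by ring
      rwa [heq]
    have htot : t + (x - e₀ - t) + (frobNum S - (x + (frobNum S - frobNum E))) ∈ T :=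
      hK.2.1 _ hts _ ht₀
    have hfin := htot (e₀ + (frobNum S - frobNum E)) ⟨e₀, he₀, rfl⟩
    have heq : t + (x - e₀ - t) + (frobNum S - (x + (frobNum S - frobNum E)))
        + (e₀ + (frobNum S - frobNum E)) = frobNum S := by ring
    rw [heq] at hfin
    exact hfK hfin
  by_contra hgoal
  have hwE : (frobNum E - x + e₀) + (frobNum S - frobNum E) ∉ tilde S E := by
    rintro ⟨e, he, heq⟩
    simp only at heq
    have : e = frobNum E - x + e₀ := by linarith
    exact hgoal (this ▸ he)
  have hT : frobNum S - ((frobNum E - x + e₀) + (frobNum S - frobNum E)) ∈ T := key _ hwE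
  have hfin := hw _ hT
  have heq : (frobNum E - x + e₀) + (frobNum S - frobNum E)
      + (frobNum S - ((frobNum E - x + e₀) + (frobNum S - frobNum E))) = frobNum S := by ring
  rw [heq] at hfin
  exact hfK hfin
end

section
/- Let S be a numerical semigroup with maximal ideal M = S∖{0} and standard canonical ideal K = K(S), let E ⊆ S be an ideal of S with normalization Ẽ = E + (f(S) − f(E)), and let b ∈ S be an odd integer. Then the numerical duplication S⋈ᵇE is almost symmetric if and only if K − (M−M) ⊆ Ẽ ⊆ K and K − Ẽ is a numerical semigroup. -/
open Set

/- ### Auxiliary lemmas -/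

lemma frobNum_not_mem' {X : Set ℤ} (hne : {z : ℤ | z ∉ X}.Nonempty)
    (hbdd : BddAbove {z : ℤ | z ∉ X}) : frobNum X ∉ X :=
  Int.csSup_mem hne hbdd

lemma mem_of_frobNum_lt' {X : Set ℤ} (hbdd : BddAbove {z : ℤ | z ∉ X})
    {z : ℤ} (hz : frobNum X < z) : z ∈ X := by
  by_contra h
  exact absurd (le_csSup hbdd h) (not_le.mpr hz)

lemma mem_maxIdeal_iff {S : Set ℤ} {x : ℤ} : x ∈ maxIdeal S ↔ x ∈ S ∧ x ≠ 0 := by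
  simp [maxIdeal]

lemma mem_dup_iff {S E : Set ℤ} {b z : ℤ} :
    z ∈ dup S E b ↔ (∃ s ∈ S, z = 2 * s) ∨ (∃ e ∈ E, z = 2 * e + b) := by
  constructor
  · rintro (⟨s, hs, rfl⟩ | ⟨e, he, rfl⟩)
    · exact Or.inl ⟨s, hs, rfl⟩
    · exact Or.inr ⟨e, he, rfl⟩
  · rintro (⟨s, hs, rfl⟩ | ⟨e, he, rfl⟩)
    · exact Or.inl ⟨s, hs, rfl⟩
    · exact Or.inr ⟨e, he, rfl⟩

/-- Main theorem: the duplication is almost symmetric iff `K - (M-M) ⊆ Ẽ ⊆ K`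
and `K - Ẽ` is a numerical semigroup. -/
theorem duplication_almost_symmetric_iff
    (S E : Set ℤ) (b : ℤ)
    (hS : IsNumericalSemigroup S) (hE : IsIdealOf S E)
    (hb : b ∈ S) (hbodd : Odd b) :
    IsAlmostSymmetric (dup S E b) ↔
      (setSub (stdCanonical S) (setSub (maxIdeal S) (maxIdeal S)) ⊆ tilde S E ∧
        tilde S E ⊆ stdCanonical S ∧
        IsNumericalSemigroup (setSub (stdCanonical S) (tilde S E))) := by
  obtain ⟨hS0, hSadd, hSnn, hSfin⟩ := hS
  obtain ⟨⟨e0, he0⟩, hES, hEadd⟩ := hE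
  obtain ⟨cb, hcb⟩ := hbodd
  have hb0 : 0 ≤ b := hSnn b hb
  have hb1 : 1 ≤ b := by omega
  have hEnn : ∀ e ∈ E, 0 ≤ e := fun e he => hSnn e (hES he)
  -- basic facts about frobNum S
  have hSbdd : BddAbove {z : ℤ | z ∉ S} := by
    have hsub : {z : ℤ | z ∉ S} ⊆ Set.Iio 0 ∪ ({z : ℤ | 0 ≤ z} \ S) := by
      intro z hz
      by_cases h0 : 0 ≤ z
      · exact Or.inr ⟨h0, hz⟩
      · exact Or.inl (by simpa using not_le.mp h0)
    exact (bddAbove_Iio.union hSfin.bddAbove).mono hsub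
  have hSne : {z : ℤ | z ∉ S}.Nonempty := ⟨-1, fun h => by have := hSnn _ h; omega⟩
  have hfS : frobNum S ∉ S := frobNum_not_mem' hSne hSbdd
  have hfSlt : ∀ z : ℤ, frobNum S < z → z ∈ S := fun z hz => mem_of_frobNum_lt' hSbdd hz
  -- basic facts about frobNum E
  have hEbdd : BddAbove {z : ℤ | z ∉ E} := by
    refine ⟨e0 + frobNum S, fun z hz => ?_⟩
    by_contra h
    push_neg at h
    apply hz
    have hmem : z - e0 ∈ S := hfSlt (z - e0) (by omega)
    have := hEadd e0 he0 (z - e0) hmem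
    have heq : e0 + (z - e0) = z := by ring
    rwa [heq] at this
  have hEne : {z : ℤ | z ∉ E}.Nonempty := ⟨-1, fun h => by have := hEnn _ h; omega⟩
  have hfE : frobNum E ∉ E := frobNum_not_mem' hEne hEbdd
  have hfElt : ∀ z : ℤ, frobNum E < z → z ∈ E := fun z hz => mem_of_frobNum_lt' hEbdd hz
  have hfSE : frobNum S ≤ frobNum E :=
    le_csSup hEbdd (show frobNum S ∈ {z : ℤ | z ∉ E} from fun h => hfS (hES h))
  -- membership in dup by parity
  have memD_even : ∀ y : ℤ, 2 * y ∈ dup S E b ↔ y ∈ S := by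
    intro y
    rw [mem_dup_iff]
    constructor
    · rintro (⟨s, hs, hy⟩ | ⟨e, he, hy⟩)
      · have : y = s := by omega
        rwa [this]
      · omega
    · intro hy
      exact Or.inl ⟨y, hy, rfl⟩
  have memD_odd : ∀ t : ℤ, 2 * t + b ∈ dup S E b ↔ t ∈ E := by
    intro t
    rw [mem_dup_iff]
    constructor
    · rintro (⟨s, hs, ht⟩ | ⟨e, he, ht⟩)
      · omega
      · have : t = e := by omega
        rwa [this]
    · intro ht
      exact Or.inr ⟨t, ht, rfl⟩
  -- Frobenius number of the duplication
  have hfD : frobNum (dup S E b) = 2 * frobNum E + b := by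
    have hgr : IsGreatest {z : ℤ | z ∉ dup S E b} (2 * frobNum E + b) := by
      constructor
      · intro h
        exact hfE ((memD_odd (frobNum E)).mp h)
      · intro z hz
        by_contra h
        push_neg at h
        apply hz
        rcases Int.even_or_odd z with ⟨y, hy⟩ | ⟨y, hy⟩
        · have hy2 : z = 2 * y := by omega
          rw [hy2]
          exact (memD_even y).mpr (hfSlt y (by omega))
        · have hy2 : z = 2 * (y - cb) + b := by omega
          rw [hy2]
          exact (memD_odd (y - cb)).mpr (hfElt (y - cb) (by omega))
    exact hgr.csSup_eq
  -- characterization of T = K - Ẽ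
  have hTmem : ∀ z : ℤ, z ∈ setSub (stdCanonical S) (tilde S E) ↔ frobNum E - z ∉ E := by
    intro z
    constructor
    · intro h hmem
      have h2 := h (frobNum E - z + (frobNum S - frobNum E)) ⟨_, hmem, rfl⟩
      apply h2
      have heq : frobNum S - (z + (frobNum E - z + (frobNum S - frobNum E))) = 0 := by ring
      rw [heq]
      exact hS0
    · intro h g hg
      obtain ⟨e, he, rfl⟩ := hg
      intro hmem
      apply h
      have heq : frobNum E - z = e + (frobNum S - (z + (e + (frobNum S - frobNum E)))) := by
        ring
      rw [heq]
      exact hEadd e he _ hmem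
  -- characterization of tilde
  have htilde : ∀ x : ℤ, x ∈ tilde S E ↔ x + (frobNum E - frobNum S) ∈ E := by
    intro x
    constructor
    · rintro ⟨e, he, rfl⟩
      have heq : e + (frobNum S - frobNum E) + (frobNum E - frobNum S) = e := by ring
      rwa [heq]
    · intro h
      exact ⟨_, h, by ring⟩
  -- tilde S E ⊆ stdCanonical S (always)
  have hfree2 : tilde S E ⊆ stdCanonical S := by
    intro x hx
    rw [htilde] at hx
    intro hmem
    apply hfE
    have heq : frobNum E = x + (frobNum E - frobNum S) + (frobNum S - x) := by ring
    rw [heq]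
    exact hEadd _ hx _ hmem
  -- the two key conditions
  constructor
  · -- almost symmetric → RHS
    intro hAS
    -- A : T + M ⊆ M
    have hA : ∀ z : ℤ, frobNum E - z ∉ E → ∀ m ∈ S, m ≠ 0 → z + m ∈ S ∧ z + m ≠ 0 := by
      intro z hz m hm hm0
      have hk : 2 * z ∈ stdCanonical (dup S E b) := by
        intro h
        rw [hfD] at h
        have heq : 2 * frobNum E + b - 2 * z = 2 * (frobNum E - z) + b := by ring
        rw [heq] at h
        exact hz ((memD_odd _).mp h)
      have hm' : 2 * m ∈ maxIdeal (dup S E b) :=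
        mem_maxIdeal_iff.mpr ⟨(memD_even m).mpr hm, by omega⟩
      have hres := mem_maxIdeal_iff.mp (hAS (2 * z) hk (2 * m) hm')
      obtain ⟨hD, hne⟩ := hres
      have heq : 2 * z + 2 * m = 2 * (z + m) := by ring
      rw [heq] at hD hne
      exact ⟨(memD_even _).mp hD, by omega⟩
    -- B : T + T ⊆ T
    have hB : ∀ z z' : ℤ, frobNum E - z ∉ E → frobNum E - z' ∉ E →
        frobNum E - (z + z') ∉ E := by
      intro z z' hz hz' hcon
      have hk : 2 * z ∈ stdCanonical (dup S E b) := by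
        intro h
        rw [hfD] at h
        have heq : 2 * frobNum E + b - 2 * z = 2 * (frobNum E - z) + b := by ring
        rw [heq] at h
        exact hz ((memD_odd _).mp h)
      have hm : 2 * (frobNum E - (z + z')) + b ∈ maxIdeal (dup S E b) :=
        mem_maxIdeal_iff.mpr ⟨(memD_odd _).mpr hcon, by omega⟩
      have hres := mem_maxIdeal_iff.mp (hAS _ hk _ hm)
      obtain ⟨hD, -⟩ := hres
      have heq : 2 * z + (2 * (frobNum E - (z + z')) + b)
          = 2 * (frobNum E - z') + b := by ring
      rw [heq] at hD
      exact hz' ((memD_odd _).mp hD)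
    refine ⟨?_, hfree2, ?_, ?_, ?_, ?_⟩
    · -- K - (M-M) ⊆ Ẽ
      intro x hx
      rw [htilde]
      by_contra hne'
      have hzT : frobNum E - (frobNum S - x) ∉ E := by
        have heq : frobNum E - (frobNum S - x) = x + (frobNum E - frobNum S) := by ring
        rwa [heq]
      have hMM : frobNum S - x ∈ setSub (maxIdeal S) (maxIdeal S) := by
        intro g hg
        obtain ⟨hgS, hg0⟩ := mem_maxIdeal_iff.mp hg
        exact mem_maxIdeal_iff.mpr (hA _ hzT g hgS hg0)
      have h2 := hx _ hMM
      apply h2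
      have heq : frobNum S - (x + (frobNum S - x)) = 0 := by ring
      rw [heq]
      exact hS0
    · -- 0 ∈ T
      rw [hTmem]
      have heq : frobNum E - 0 = frobNum E := by ring
      rwa [heq]
    · -- additive closure of T
      intro x hx y hy
      rw [hTmem] at hx hy ⊢
      exact hB x y hx hy
    · -- nonnegativity of T
      intro x hx
      rw [hTmem] at hx
      by_contra h
      push_neg at h
      exact hx (hfElt _ (by omega))
    · -- finiteness of the complement of T
      apply Set.Finite.subset (Set.finite_Icc 0 (frobNum E))
      rintro z ⟨h0, hnT⟩
      rw [hTmem] at hnT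
      have hmem : frobNum E - z ∈ E := not_not.mp hnT
      have := hEnn _ hmem
      exact Set.mem_Icc.mpr ⟨h0, by omega⟩
  · -- RHS → almost symmetric
    rintro ⟨h1, -, -, hadd, -, -⟩
    -- A : T + M ⊆ M
    have hA : ∀ z : ℤ, frobNum E - z ∉ E → ∀ m ∈ S, m ≠ 0 → z + m ∈ S ∧ z + m ≠ 0 := by
      intro z hz m hm hm0
      have hxnt : frobNum S - z ∉ tilde S E := by
        rw [htilde]
        have heq : frobNum S - z + (frobNum E - frobNum S) = frobNum E - z := by ring
        rwa [heq]
      have hx : frobNum S - z ∉ setSub (stdCanonical S) (setSub (maxIdeal S) (maxIdeal S)) :=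
        fun hmem => hxnt (h1 hmem)
      rw [setSub, Set.mem_setOf_eq] at hx
      push_neg at hx
      obtain ⟨w, hw, hwk⟩ := hx
      have hws : z - w ∈ S := by
        have h3 : frobNum S - (frobNum S - z + w) ∈ S := not_not.mp hwk
        have heq : frobNum S - (frobNum S - z + w) = z - w := by ring
        rwa [heq] at h3
      have hwm := mem_maxIdeal_iff.mp (hw m (mem_maxIdeal_iff.mpr ⟨hm, hm0⟩))
      obtain ⟨hwmS, hwm0⟩ := hwm
      have hsum : (z - w) + (w + m) ∈ S := hSadd _ hws _ hwmS
      have heq : (z - w) + (w + m) = z + m := by ring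
      rw [heq] at hsum
      refine ⟨hsum, ?_⟩
      have h4 := hSnn _ hws
      have h5 := hSnn _ hwmS
      omega
    -- B : T + T ⊆ T
    have hB : ∀ z z' : ℤ, frobNum E - z ∉ E → frobNum E - z' ∉ E →
        frobNum E - (z + z') ∉ E := by
      intro z z' hz hz'
      have := hadd z ((hTmem z).mpr hz) z' ((hTmem z').mpr hz')
      exact (hTmem _).mp this
    -- prove almost symmetry of the duplication
    intro k hk m hm
    have hk' : frobNum (dup S E b) - k ∉ dup S E b := hk
    rw [hfD] at hk'
    obtain ⟨hmD, hm0⟩ := mem_maxIdeal_iff.mp hm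
    rcases Int.even_or_odd k with ⟨y, hy⟩ | ⟨y, hy⟩
    · -- k = 2y even
      have hky : k = 2 * y := by omega
      have hkey : frobNum E - y ∉ E := by
        intro h
        apply hk'
        have heq : 2 * frobNum E + b - k = 2 * (frobNum E - y) + b := by omega
        rw [heq]
        exact (memD_odd _).mpr h
      rcases mem_dup_iff.mp hmD with ⟨s, hs, hms⟩ | ⟨e, he, hms⟩
      · -- m = 2s
        have hs0 : s ≠ 0 := by omega
        obtain ⟨hsum, hsum0⟩ := hA y hkey s hs hs0
        refine mem_maxIdeal_iff.mpr ⟨?_, by omega⟩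
        have heq : k + m = 2 * (y + s) := by omega
        rw [heq]
        exact (memD_even _).mpr hsum
      · -- m = 2e + b
        have hye : y + e ∈ E := by
          by_contra hne'
          have hz' : frobNum E - (frobNum E - (y + e)) ∉ E := by
            have heq : frobNum E - (frobNum E - (y + e)) = y + e := by ring
            rwa [heq]
          have h6 := hB y (frobNum E - (y + e)) hkey hz'
          apply h6
          have heq : frobNum E - (y + (frobNum E - (y + e))) = e := by ring
          rwa [heq]
        refine mem_maxIdeal_iff.mpr ⟨?_, by omega⟩
        have heq : k + m = 2 * (y + e) + b := by omega
        rw [heq]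
        exact (memD_odd _).mpr hye
    · -- k = 2y + 1 odd, k = 2t + b with t = y - cb
      set t := y - cb with ht
      have hkt : k = 2 * t + b := by omega
      have hkey : frobNum E - t ∉ S := by
        intro h
        apply hk'
        have heq : 2 * frobNum E + b - k = 2 * (frobNum E - t) := by omega
        rw [heq]
        exact (memD_even _).mpr h
      have hkeyE : frobNum E - t ∉ E := fun h => hkey (hES h)
      rcases mem_dup_iff.mp hmD with ⟨s, hs, hms⟩ | ⟨e, he, hms⟩
      · -- m = 2s
        have hs0 : s ≠ 0 := by omega
        have hts : t + s ∈ E := by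
          by_contra hne'
          apply hkey
          have hz' : frobNum E - (frobNum E - (t + s)) ∉ E := by
            have heq : frobNum E - (frobNum E - (t + s)) = t + s := by ring
            rwa [heq]
          obtain ⟨h7, -⟩ := hA (frobNum E - (t + s)) hz' s hs hs0
          have heq : frobNum E - (t + s) + s = frobNum E - t := by ring
          rwa [heq] at h7
        refine mem_maxIdeal_iff.mpr ⟨?_, by omega⟩
        have heq : k + m = 2 * (t + s) + b := by omega
        rw [heq]
        exact (memD_odd _).mpr hts
      · -- m = 2e + b
        have heb : e + b ∈ S := hSadd e (hES he) b hb
        have heb0 : e + b ≠ 0 := by have := hEnn e he; omega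
        obtain ⟨hsum, hsum0⟩ := hA t hkeyE (e + b) heb heb0
        refine mem_maxIdeal_iff.mpr ⟨?_, ?_⟩
        · have heq : k + m = 2 * (t + (e + b)) := by omega
          rw [heq]
          exact (memD_even _).mpr hsum
        · omega
end

section
/- Let S be a numerical semigroup with maximal ideal M = S∖{0} and standard canonical ideal K = K(S), let n be a nonzero element of S, and let Ap(S,n) be the Apéry set of S with respect to n. Then the following are equivalent: (i) for every relative ideal Ẽ with K − (M−M) ⊆ Ẽ ⊆ K, the set K − Ẽ is a numerical semigroup; (ii) for every three elements w_i, w_j, w_k of Ap(S,n) that are maximal with respect to the order ≤_S, one has w_i + w_j ≠ w_k + n. -/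
open Set

/-- The Apéry set of `S` with respect to `n`. -/
def aperySet (S : Set ℤ) (n : ℤ) : Set ℤ := {w ∈ S | w - n ∉ S}

/-- `w` is maximal in the Apéry set with respect to the order
`w ≤_S w' ↔ w' - w ∈ S`. -/
def aperyMaximal (S : Set ℤ) (n w : ℤ) : Prop :=
  w ∈ aperySet S n ∧ ∀ w' ∈ aperySet S n, w' - w ∈ S → w' = w

section NSAux

variable {S : Set ℤ}

lemma frob_spec_s10 (hS : IsNumericalSemigroup S) :
    frobNum S ∉ S ∧ ∀ z : ℤ, frobNum S < z → z ∈ S := by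
  obtain ⟨h0, hadd, hpos, hfin⟩ := hS
  have hne : {z : ℤ | z ∉ S}.Nonempty :=
    ⟨-1, fun h => by have := hpos _ h; omega⟩
  obtain ⟨b, hb⟩ := hfin.bddAbove
  have hbdd : BddAbove {z : ℤ | z ∉ S} := by
    refine ⟨max b 0, fun z hz => ?_⟩
    rcases lt_or_ge z 0 with h | h
    · exact le_trans h.le (le_max_right _ _)
    · exact le_trans (hb ⟨h, hz⟩) (le_max_left _ _)
  have hmem : frobNum S ∈ {z : ℤ | z ∉ S} := Int.csSup_mem hne hbdd
  refine ⟨hmem, fun z hz => ?_⟩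
  by_contra hzS
  exact absurd (le_csSup hbdd hzS) (not_le.mpr hz)

lemma mem_K_of_gt (hS : IsNumericalSemigroup S) {x : ℤ} (hx : frobNum S < x) :
    x ∈ stdCanonical S := by
  intro h
  have := hS.2.2.1 _ h
  omega

lemma K_nonneg (hS : IsNumericalSemigroup S) {x : ℤ} (hx : x ∈ stdCanonical S) :
    0 ≤ x := by
  by_contra h
  exact hx ((frob_spec_s10 hS).2 _ (by omega))

lemma S_sub_K (hS : IsNumericalSemigroup S) : S ⊆ stdCanonical S := by
  intro s hs h
  have : frobNum S - s + s ∈ S := hS.2.1 _ h _ hs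
  rw [show frobNum S - s + s = frobNum S by ring] at this
  exact (frob_spec_s10 hS).1 this

lemma K_ideal (hS : IsNumericalSemigroup S) {k s : ℤ} (hk : k ∈ stdCanonical S)
    (hs : s ∈ S) : k + s ∈ stdCanonical S := by
  intro h
  apply hk
  have : frobNum S - (k + s) + s ∈ S := hS.2.1 _ h _ hs
  rwa [show frobNum S - (k + s) + s = frobNum S - k by ring] at this

lemma duality (hS : IsNumericalSemigroup S) (E : Set ℤ)
    (hE : ∀ e ∈ E, ∀ s ∈ S, e + s ∈ E) :
    setSub (stdCanonical S) (setSub (stdCanonical S) E) = E := by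
  ext x
  constructor
  · intro hx
    by_contra hxE
    have h1 : frobNum S - x ∈ setSub (stdCanonical S) E := by
      intro e he
      show frobNum S - (frobNum S - x + e) ∉ S
      intro hmem
      rw [show frobNum S - (frobNum S - x + e) = x - e by ring] at hmem
      have := hE e he _ hmem
      rw [show e + (x - e) = x by ring] at this
      exact hxE this
    have h2 := hx _ h1
    apply h2
    rw [show frobNum S - (x + (frobNum S - x)) = 0 by ring]
    exact hS.1
  · intro hx z hz
    have := hz x hx
    rwa [add_comm] at this

lemma mem_M_iff {m : ℤ} : m ∈ maxIdeal S ↔ m ∈ S ∧ m ≠ 0 := by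
  simp [maxIdeal]

lemma S_sub_L (hS : IsNumericalSemigroup S) :
    S ⊆ setSub (maxIdeal S) (maxIdeal S) := by
  intro s hs m hm
  rw [mem_M_iff] at hm ⊢
  have h1 := hS.2.2.1 _ hs
  have h2 := hS.2.2.1 _ hm.1
  exact ⟨hS.2.1 _ hs _ hm.1, by omega⟩

lemma L_add (hS : IsNumericalSemigroup S) {a b : ℤ}
    (ha : a ∈ setSub (maxIdeal S) (maxIdeal S))
    (hb : b ∈ setSub (maxIdeal S) (maxIdeal S)) :
    a + b ∈ setSub (maxIdeal S) (maxIdeal S) := by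
  intro m hm
  have := ha _ (hb _ hm)
  rwa [show a + (b + m) = a + b + m by ring] at this

lemma L_ideal (hS : IsNumericalSemigroup S) :
    ∀ a ∈ setSub (maxIdeal S) (maxIdeal S), ∀ s ∈ S,
      a + s ∈ setSub (maxIdeal S) (maxIdeal S) :=
  fun a ha s hs => L_add hS ha (S_sub_L hS hs)

lemma L_nonneg (hS : IsNumericalSemigroup S) {n : ℤ} (hn : n ∈ S) (hn0 : n ≠ 0)
    {z : ℤ} (hz : z ∈ setSub (maxIdeal S) (maxIdeal S)) : 0 ≤ z := by
  by_contra h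
  push_neg at h
  have hnM : n ∈ maxIdeal S := mem_M_iff.mpr ⟨hn, hn0⟩
  have key : ∀ k : ℕ, n + ((k : ℤ) + 1) * z ∈ maxIdeal S := by
    intro k
    induction k with
    | zero =>
      have := hz _ hnM
      rwa [show z + n = n + ((0:ℕ) + 1 : ℤ) * z by push_cast; ring] at this
    | succ k ih =>
      have := hz _ ih
      rwa [show z + (n + ((k:ℤ) + 1) * z) = n + (((k+1:ℕ):ℤ) + 1) * z by push_cast; ring]
        at this
  have h1 := key n.toNat
  have h2 := hS.2.2.1 _ (mem_M_iff.mp h1).1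
  have h3 : (n.toNat : ℤ) = n := Int.toNat_of_nonneg (hS.2.2.1 _ hn)
  rw [h3] at h2
  nlinarith

end NSAux

section Apery

variable {S : Set ℤ} {n : ℤ}

lemma pf_to_apmax (hS : IsNumericalSemigroup S) (hn : n ∈ S) (hn0 : n ≠ 0)
    {x : ℤ} (hxL : x ∈ setSub (maxIdeal S) (maxIdeal S)) (hxS : x ∉ S) :
    aperyMaximal S n (x + n) := by
  have hnM : n ∈ maxIdeal S := mem_M_iff.mpr ⟨hn, hn0⟩
  have hw : x + n ∈ maxIdeal S := hxL _ hnM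
  refine ⟨⟨(mem_M_iff.mp hw).1, by rwa [show x + n - n = x by ring]⟩, ?_⟩
  intro w' hw' hd
  by_contra hne
  have hdM : w' - (x + n) ∈ maxIdeal S := mem_M_iff.mpr ⟨hd, fun h => hne (by omega)⟩
  have := hxL _ hdM
  rw [show x + (w' - (x + n)) = w' - n by ring] at this
  exact hw'.2 (mem_M_iff.mp this).1

lemma apmax_to_pf (hS : IsNumericalSemigroup S) (hn : n ∈ S) (hn0 : n ≠ 0)
    (h1 : (1 : ℤ) ∉ S) {w : ℤ} (hw : aperyMaximal S n w) :
    w - n ∉ S ∧ w - n ∈ setSub (maxIdeal S) (maxIdeal S) := by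
  obtain ⟨⟨hwS, hwn⟩, hmax⟩ := hw
  have hstep : ∀ m ∈ maxIdeal S, w - n + m ∈ S := by
    intro m hm
    obtain ⟨hmS, hm0⟩ := mem_M_iff.mp hm
    have hy : w + m ∈ S := hS.2.1 _ hwS _ hmS
    by_contra hc
    have : w + m ∈ aperySet S n := ⟨hy, by rwa [show w + m - n = w - n + m by ring]⟩
    have := hmax _ this (by rw [show w + m - w = m by ring]; exact hmS)
    omega
  refine ⟨hwn, ?_⟩
  intro m hm
  obtain ⟨hmS, hm0⟩ := mem_M_iff.mp hm
  refine mem_M_iff.mpr ⟨hstep m hm, ?_⟩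
  intro hzero
  -- then w - n = -m ; use m' = frobNum S + m
  have hfS := (frob_spec_s10 hS).1
  have hf1 : -1 ∉ S := fun h => by have := hS.2.2.1 _ h; omega
  have hfge : (-1 : ℤ) ≤ frobNum S := by
    by_contra h
    exact hf1 ((frob_spec_s10 hS).2 _ (by omega))
  have hm2 : 2 ≤ m := by
    have := hS.2.2.1 _ hmS
    rcases eq_or_ne m 1 with rfl | hm1
    · exact absurd hmS h1
    · omega
  have hm' : frobNum S + m ∈ maxIdeal S :=
    mem_M_iff.mpr ⟨(frob_spec_s10 hS).2 _ (by omega), by omega⟩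
  have := hstep _ hm'
  rw [show w - n + (frobNum S + m) = (w - n + m) + frobNum S by ring, hzero, zero_add]
    at this
  exact hfS this

lemma apmax_ge (hS : IsNumericalSemigroup S) (hn : n ∈ S) (hn0 : n ≠ 0)
    (h1 : (1 : ℤ) ∈ S) {w : ℤ} (hw : aperyMaximal S n w) : w = n - 1 := by
  have hall : ∀ z : ℤ, 0 ≤ z → z ∈ S := by
    intro z hz
    lift z to ℕ using hz
    induction z with
    | zero => exact_mod_cast hS.1
    | succ k ih =>
      have := hS.2.1 _ ih _ h1
      rwa [show ((k:ℤ)) + 1 = ((k+1 : ℕ) : ℤ) by push_cast; ring] at this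
  have hn1 : 1 ≤ n := by have := hS.2.2.1 _ hn; omega
  obtain ⟨⟨hwS, hwn⟩, hmax⟩ := hw
  have hw0 := hS.2.2.1 _ hwS
  have hwlt : w ≤ n - 1 := by
    by_contra h
    exact hwn (hall _ (by omega))
  have hap : n - 1 ∈ aperySet S n :=
    ⟨hall _ (by omega), fun h => by have := hS.2.2.1 _ h; omega⟩
  exact (hmax _ hap (hall _ (by omega))).symm

end Apery

section Main

variable {S : Set ℤ} {n : ℤ}

lemma lhs_to_condA (hS : IsNumericalSemigroup S) (hn : n ∈ S) (hn0 : n ≠ 0)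
    (hL : ∀ E : Set ℤ, IsRelIdealOf S E →
        setSub (stdCanonical S) (setSub (maxIdeal S) (maxIdeal S)) ⊆ E →
        E ⊆ stdCanonical S →
        IsNumericalSemigroup (setSub (stdCanonical S) E)) :
    ∀ x y : ℤ, x ∈ setSub (maxIdeal S) (maxIdeal S) → x ∉ S →
      y ∈ setSub (maxIdeal S) (maxIdeal S) → y ∉ S → x + y ∈ S := by
  intro x y hxL hxS hyL hyS
  by_contra hsum
  set F : Set ℤ := S ∪ {x, y} with hF
  have hSF : S ⊆ F := subset_union_left
  have hFL : F ⊆ setSub (maxIdeal S) (maxIdeal S) := by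
    rintro a (ha | ha)
    · exact S_sub_L hS ha
    · rcases ha with rfl | ha
      · exact hxL
      · rw [mem_singleton_iff] at ha; subst ha; exact hyL
  have hFclosed : ∀ e ∈ F, ∀ s ∈ S, e + s ∈ F := by
    intro e he s hs
    rcases eq_or_ne s 0 with rfl | hs0
    · rwa [add_zero]
    · have hsM : s ∈ maxIdeal S := mem_M_iff.mpr ⟨hs, hs0⟩
      exact hSF (mem_M_iff.mp (hFL he _ hsM)).1
  have hFpos : ∀ g ∈ F, 0 ≤ g := fun g hg => L_nonneg hS hn hn0 (hFL hg)
  have hfS := frob_spec_s10 hS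
  have hne : (setSub (stdCanonical S) F).Nonempty := by
    refine ⟨frobNum S + 1, fun g hg => mem_K_of_gt hS ?_⟩
    have := hFpos g hg
    omega
  have hrel : IsRelIdealOf S (setSub (stdCanonical S) F) := by
    refine ⟨hne, ?_, ⟨frobNum S + 1, hfS.2 _ (by omega), ?_⟩⟩
    · intro e he s hs g hg
      have := K_ideal hS (he g hg) hs
      rwa [show e + g + s = e + s + g by ring] at this
    · intro e he
      have heK : e ∈ stdCanonical S := by
        have := he 0 (hSF hS.1)
        rwa [add_zero] at this
      have := K_nonneg hS heK
      exact hfS.2 _ (by omega)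
  have hlow : setSub (stdCanonical S) (setSub (maxIdeal S) (maxIdeal S)) ⊆
      setSub (stdCanonical S) F := fun z hz g hg => hz g (hFL hg)
  have hhigh : setSub (stdCanonical S) F ⊆ stdCanonical S := by
    intro z hz
    have := hz 0 (hSF hS.1)
    rwa [add_zero] at this
  have hns := hL _ hrel hlow hhigh
  rw [duality hS F hFclosed] at hns
  have hxF : x ∈ F := Or.inr (Or.inl rfl)
  have hyF : y ∈ F := Or.inr (Or.inr rfl)
  have := hns.2.1 _ hxF _ hyF
  rcases this with h | h
  · exact hsum h
  · have hx0 : x ≠ 0 := fun h => hxS (h ▸ hS.1)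
    have hy0 : y ≠ 0 := fun h => hyS (h ▸ hS.1)
    rcases h with h | h
    · omega
    · rw [mem_singleton_iff] at h; omega

lemma condA_to_lhs (hS : IsNumericalSemigroup S) (hn : n ∈ S) (hn0 : n ≠ 0)
    (hA : ∀ x y : ℤ, x ∈ setSub (maxIdeal S) (maxIdeal S) → x ∉ S →
      y ∈ setSub (maxIdeal S) (maxIdeal S) → y ∉ S → x + y ∈ S) :
    ∀ E : Set ℤ, IsRelIdealOf S E →
        setSub (stdCanonical S) (setSub (maxIdeal S) (maxIdeal S)) ⊆ E →
        E ⊆ stdCanonical S →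
        IsNumericalSemigroup (setSub (stdCanonical S) E) := by
  intro E hErel hlow hhigh
  set F := setSub (stdCanonical S) E with hFdef
  have hSF : S ⊆ F := by
    intro s hs e he
    have := K_ideal hS (hhigh he) hs
    rwa [add_comm] at this
  have hFL : F ⊆ setSub (maxIdeal S) (maxIdeal S) := by
    have hLd := duality hS _ (L_ideal hS)
    intro z hz
    rw [← hLd]
    intro g hg
    exact hz g (hlow hg)
  have hclosed : ∀ a ∈ F, ∀ b ∈ F, a + b ∈ F := by
    intro a ha b hb
    by_cases haS : a ∈ S
    · by_cases hbS : b ∈ S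
      · exact hSF (hS.2.1 _ haS _ hbS)
      · rcases eq_or_ne a 0 with rfl | ha0
        · rwa [zero_add]
        · have := hFL hb _ (mem_M_iff.mpr ⟨haS, ha0⟩)
          rw [add_comm] at this
          exact hSF (mem_M_iff.mp this).1
    · by_cases hbS : b ∈ S
      · rcases eq_or_ne b 0 with rfl | hb0
        · rwa [add_zero]
        · have := hFL ha _ (mem_M_iff.mpr ⟨hbS, hb0⟩)
          exact hSF (mem_M_iff.mp this).1
      · exact hSF (hA a b (hFL ha) haS (hFL hb) hbS)
  refine ⟨hSF hS.1, hclosed, fun z hz => L_nonneg hS hn hn0 (hFL hz), ?_⟩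
  exact hS.2.2.2.subset (fun z hz => ⟨hz.1, fun h => hz.2 (hSF h)⟩)

end Main

/-- `K - Ẽ` is a numerical semigroup for every relative ideal `Ẽ` with
`K - (M-M) ⊆ Ẽ ⊆ K` iff no sum of two maximal Apéry elements equals a maximal
Apéry element plus `n`. -/
theorem every_dual_is_semigroup_iff_apery
    (S : Set ℤ) (n : ℤ)
    (hS : IsNumericalSemigroup S) (hn : n ∈ S) (hn0 : n ≠ 0) :
    (∀ E : Set ℤ, IsRelIdealOf S E →
        setSub (stdCanonical S) (setSub (maxIdeal S) (maxIdeal S)) ⊆ E →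
        E ⊆ stdCanonical S →
        IsNumericalSemigroup (setSub (stdCanonical S) E)) ↔
      (∀ wi wj wk : ℤ, aperyMaximal S n wi → aperyMaximal S n wj →
        aperyMaximal S n wk → wi + wj ≠ wk + n) := by
  constructor
  · intro hL wi wj wk hi hj hk heq
    by_cases h1 : (1 : ℤ) ∈ S
    · have ei := apmax_ge hS hn hn0 h1 hi
      have ej := apmax_ge hS hn hn0 h1 hj
      have ek := apmax_ge hS hn hn0 h1 hk
      omega
    · have hA := lhs_to_condA hS hn hn0 hL
      obtain ⟨hiS, hiL⟩ := apmax_to_pf hS hn hn0 h1 hi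
      obtain ⟨hjS, hjL⟩ := apmax_to_pf hS hn hn0 h1 hj
      obtain ⟨hkS, hkL⟩ := apmax_to_pf hS hn hn0 h1 hk
      have hmem := hA _ _ hiL hiS hjL hjS
      rw [show wi - n + (wj - n) = wk - n by omega] at hmem
      exact hkS hmem
  · intro hR
    apply condA_to_lhs hS hn hn0
    intro x y hxL hxS hyL hyS
    by_contra hsum
    have hi := pf_to_apmax hS hn hn0 hxL hxS
    have hj := pf_to_apmax hS hn hn0 hyL hyS
    have hk := pf_to_apmax hS hn hn0 (L_add hS hxL hyL) hsum
    exact hR _ _ _ hi hj hk (by ring)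
end

section
/- Let S be a numerical semigroup with maximal ideal M = S∖{0} and standard canonical ideal K = K(S), and let E be an ideal of S with normalization Ẽ = E + (f(S) − f(E)). If K − (M−M) ⊆ Ẽ ⊆ K and K − Ẽ is a numerical semigroup, then K − Ẽ = Ẽ − Ẽ. -/
open Set

/-- If `K - (M-M) ⊆ Ẽ ⊆ K` and `K - Ẽ` is a numerical semigroup, then
`K - Ẽ = Ẽ - Ẽ`. -/
theorem dual_eq_EsubE
    (S E : Set ℤ)
    (hS : IsNumericalSemigroup S) (hE : IsIdealOf S E)
    (h1 : setSub (stdCanonical S) (setSub (maxIdeal S) (maxIdeal S)) ⊆ tilde S E)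
    (h2 : tilde S E ⊆ stdCanonical S)
    (hK : IsNumericalSemigroup (setSub (stdCanonical S) (tilde S E))) :
    setSub (stdCanonical S) (tilde S E) = setSub (tilde S E) (tilde S E) := by
  obtain ⟨hne, hES, hadd⟩ := hE
  set f := frobNum S with hf
  set T := tilde S E with hT
  have h0S : (0:ℤ) ∈ S := hS.1
  -- T is closed under adding elements of S
  have hTS : ∀ t ∈ T, ∀ s ∈ S, t + s ∈ T := by
    rintro t ⟨e, he, rfl⟩ s hs
    exact ⟨e + s, hadd e he s hs, by ring⟩
  -- key formula: for X with X + S ⊆ X, K − X = {z | f − z ∉ X}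
  have formula : ∀ X : Set ℤ, (∀ x ∈ X, ∀ s ∈ S, x + s ∈ X) →
      setSub (stdCanonical S) X = {z : ℤ | f - z ∉ X} := by
    intro X hX
    ext z
    simp only [setSub, stdCanonical, Set.mem_setOf_eq, ← hf]
    constructor
    · intro h hz
      have := h (f - z) hz
      simp only [show f - (z + (f - z)) = 0 by ring] at this
      exact this h0S
    · intro h g hg hmem
      have : g + (f - (z + g)) ∈ X := hX _ hg _ hmem
      rw [show g + (f - (z + g)) = f - z by ring] at this
      exact h this
  have hKT : setSub (stdCanonical S) T = {z : ℤ | f - z ∉ T} := formula T hTS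
  -- K − T is closed under adding elements of S
  have hKTS : ∀ x ∈ setSub (stdCanonical S) T, ∀ s ∈ S, x + s ∈ setSub (stdCanonical S) T := by
    intro x hx s hs
    rw [hKT] at hx ⊢
    intro hmem
    apply hx
    have : (f - (x + s)) + s ∈ T := hTS _ hmem _ hs
    rwa [show f - (x + s) + s = f - x by ring] at this
  -- duality: K − (K − T) = T
  have hdual : setSub (stdCanonical S) (setSub (stdCanonical S) T) = T := by
    rw [formula _ hKTS]
    ext z
    simp only [Set.mem_setOf_eq, hKT, not_not]
    rw [show f - (f - z) = z by ring]
  ext z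
  constructor
  · intro hz t ht
    -- z + t ∈ K − (K − T) = T
    rw [← hdual]
    intro w hw
    have hzw : z + w ∈ setSub (stdCanonical S) T := hK.2.1 z hz w hw
    have := hzw t ht
    rwa [show z + t + w = z + w + t by ring]
  · intro hz w hw
    exact h2 (hz w hw)
end

section
/- Let S be a numerical semigroup, E ⊆ S an ideal of S, n ∈ ℕ with n ≥ 2, and b ∈ S relatively prime to n. Then the numerical n-tuplication S⋈ᵇₙE = n·S ∪ (n·E + b) ∪ (n·(2E) + 2b) ∪ … ∪ (n·((n−1)E) + (n−1)b) is a numerical semigroup, and S = {x ∈ ℕ : nx ∈ S⋈ᵇₙE}, i.e. S is one over n of S⋈ᵇₙE. -/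
open Set

/-- The `k`-th power of an ideal: `0E = S`, `(k+1)E = kE + E`. -/
def idealPow (S E : Set ℤ) : ℕ → Set ℤ
  | 0 => S
  | k + 1 => {z : ℤ | ∃ x ∈ idealPow S E k, ∃ e ∈ E, z = x + e}

/-- The numerical n-tuplication: the union of the sets `n·(kE) + kb` for
`k = 0, …, n-1`. -/
def ntup (S E : Set ℤ) (n : ℕ) (b : ℤ) : Set ℤ :=
  ⋃ k ∈ Finset.range n, (fun x => (n : ℤ) * x + (k : ℤ) * b) '' idealPow S E k

section Aux

variable {S E : Set ℤ}

lemma idealPow_subset (hS : IsNumericalSemigroup S) (hE : IsIdealOf S E) :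
    ∀ k, idealPow S E k ⊆ S := by
  intro k
  induction k with
  | zero => exact subset_rfl
  | succ k ih =>
    rintro z ⟨x, hx, e, he, rfl⟩
    exact hS.2.1 x (ih hx) e (hE.2.1 he)

lemma idealPow_add_mem (hS : IsNumericalSemigroup S) (hE : IsIdealOf S E) :
    ∀ k, ∀ x ∈ idealPow S E k, ∀ s ∈ S, x + s ∈ idealPow S E k := by
  intro k
  induction k with
  | zero => exact fun x hx s hs => hS.2.1 x hx s hs
  | succ k ih =>
    rintro z ⟨x, hx, e, he, rfl⟩ s hs
    exact ⟨x + s, ih x hx s hs, e, he, by ring⟩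

lemma idealPow_succ_subset (hS : IsNumericalSemigroup S) (hE : IsIdealOf S E) (k : ℕ) :
    idealPow S E (k + 1) ⊆ idealPow S E k := by
  rintro z ⟨x, hx, e, he, rfl⟩
  exact idealPow_add_mem hS hE k x hx e (hE.2.1 he)

lemma idealPow_mono (hS : IsNumericalSemigroup S) (hE : IsIdealOf S E) {m k : ℕ}
    (h : m ≤ k) : idealPow S E k ⊆ idealPow S E m := by
  induction k with
  | zero => simp_all
  | succ k ih =>
    rcases Nat.lt_or_ge m (k + 1) with h' | h'
    · exact (idealPow_succ_subset hS hE k).trans (ih (Nat.lt_succ_iff.mp h'))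
    · have : m = k + 1 := le_antisymm h h'
      subst this; exact subset_rfl

lemma idealPow_sum (hS : IsNumericalSemigroup S) (hE : IsIdealOf S E) :
    ∀ l k, ∀ x ∈ idealPow S E k, ∀ y ∈ idealPow S E l, x + y ∈ idealPow S E (k + l) := by
  intro l
  induction l with
  | zero => exact fun k x hx y hy => idealPow_add_mem hS hE k x hx y hy
  | succ l ih =>
    rintro k x hx z ⟨y, hy, e, he, rfl⟩
    exact ⟨x + y, ih k x hx y hy, e, he, by ring⟩

lemma exists_bound (hS : IsNumericalSemigroup S) : ∃ N : ℤ, ∀ z, N ≤ z → z ∈ S := by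
  obtain ⟨B, hB⟩ := hS.2.2.2.bddAbove
  refine ⟨max B 0 + 1, fun z hz => ?_⟩
  by_contra h
  have hz0 : (0 : ℤ) ≤ z := by
    have := le_max_right B 0; linarith
  have : z ∈ ({z : ℤ | 0 ≤ z} \ S) := ⟨hz0, h⟩
  have := hB this
  have := le_max_left B 0
  linarith

lemma idealPow_nonempty (hS : IsNumericalSemigroup S) (hE : IsIdealOf S E) (k : ℕ) :
    (idealPow S E k).Nonempty := by
  induction k with
  | zero => exact ⟨0, hS.1⟩
  | succ k ih =>
    obtain ⟨x, hx⟩ := ih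
    obtain ⟨e, he⟩ := hE.1
    exact ⟨x + e, x, hx, e, he, rfl⟩

lemma idealPow_bound (hS : IsNumericalSemigroup S) (hE : IsIdealOf S E) (k : ℕ) :
    ∃ c : ℤ, ∀ z, c ≤ z → z ∈ idealPow S E k := by
  obtain ⟨m, hm⟩ := idealPow_nonempty hS hE k
  obtain ⟨N, hN⟩ := exists_bound hS
  refine ⟨m + N, fun z hz => ?_⟩
  have : m + (z - m) ∈ idealPow S E k :=
    idealPow_add_mem hS hE k m hm (z - m) (hN _ (by linarith))
  simpa using this

lemma mem_ntup {n : ℕ} {b z : ℤ} :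
    z ∈ ntup S E n b ↔ ∃ k < n, ∃ x ∈ idealPow S E k, z = (n : ℤ) * x + (k : ℤ) * b := by
  simp [ntup, eq_comm]

end Aux

/-- The numerical n-tuplication is a numerical semigroup and `S` is one over
`n` of it. -/
theorem ntuplication_is_numerical_semigroup
    (S E : Set ℤ) (n : ℕ) (b : ℤ)
    (hS : IsNumericalSemigroup S) (hE : IsIdealOf S E)
    (hn : 2 ≤ n) (hb : b ∈ S) (hcop : IsCoprime b (n : ℤ)) :
    IsNumericalSemigroup (ntup S E n b) ∧
      S = {x : ℤ | 0 ≤ x ∧ (n : ℤ) * x ∈ ntup S E n b} := by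
  obtain ⟨c, hc⟩ := idealPow_bound hS hE (n - 1)
  have hn0 : (0 : ℤ) < n := by exact_mod_cast Nat.lt_of_lt_of_le (by norm_num) hn
  have hb0 : 0 ≤ b := hS.2.2.1 b hb
  have hcK : ∀ k < n, ∀ z : ℤ, c ≤ z → z ∈ idealPow S E k := by
    intro k hk z hz
    exact idealPow_mono hS hE (Nat.le_sub_one_of_lt hk) (hc z hz)
  -- main cofinality claim
  have hbig : ∀ z : ℤ, (n : ℤ) * c + (n : ℤ) * b ≤ z → z ∈ ntup S E n b := by
    intro z hz
    obtain ⟨u, v, huv⟩ := hcop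
    set k : ℤ := (z * u) % (n : ℤ) with hk
    have hk0 : 0 ≤ k := Int.emod_nonneg _ (by positivity)
    have hkn : k < (n : ℤ) := Int.emod_lt_of_pos _ hn0
    have hdvd1 : (n : ℤ) ∣ z * u - k := Int.dvd_self_sub_of_emod_eq rfl
    have hdvd : (n : ℤ) ∣ z - k * b := by
      have : z - k * b = z * (u * b + v * (n : ℤ)) - k * b := by rw [huv]; ring
      rw [this]
      have : z * (u * b + v * (n : ℤ)) - k * b = (z * u - k) * b + (n : ℤ) * (z * v) := by ring
      rw [this]
      exact dvd_add (Dvd.dvd.mul_right hdvd1 b) (Dvd.intro _ rfl)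
    obtain ⟨x, hx⟩ := hdvd
    have hxc : c ≤ x := by
      have hkb : k * b ≤ (n : ℤ) * b := by
        apply mul_le_mul_of_nonneg_right (le_of_lt hkn) hb0
      have : (n : ℤ) * c ≤ (n : ℤ) * x := by linarith [hx]
      exact le_of_mul_le_mul_left this hn0
    set kn : ℕ := k.toNat with hknn
    have hknc : (kn : ℤ) = k := Int.toNat_of_nonneg hk0
    have hknlt : kn < n := by
      have : (kn : ℤ) < (n : ℤ) := by rw [hknc]; exact hkn
      exact_mod_cast this
    rw [mem_ntup]
    exact ⟨kn, hknlt, x, hcK kn hknlt x hxc, by rw [hknc]; linarith [hx]⟩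
  constructor
  · refine ⟨?_, ?_, ?_, ?_⟩
    · rw [mem_ntup]
      exact ⟨0, by omega, 0, hS.1, by simp⟩
    · intro z1 hz1 z2 hz2
      rw [mem_ntup] at hz1 hz2 ⊢
      obtain ⟨k, hk, x, hx, rfl⟩ := hz1
      obtain ⟨l, hl, y, hy, rfl⟩ := hz2
      rcases Nat.lt_or_ge (k + l) n with h | h
      · refine ⟨k + l, h, x + y, idealPow_sum hS hE l k x hx y hy, ?_⟩
        push_cast; ring
      · have hm : k + l - n < n := by omega
        have hxyb : x + y + b ∈ idealPow S E (k + l - n) := by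
          apply idealPow_mono hS hE (Nat.sub_le _ _)
          exact idealPow_add_mem hS hE _ _ (idealPow_sum hS hE l k x hx y hy) b hb
        refine ⟨k + l - n, hm, x + y + b, hxyb, ?_⟩
        push_cast [Nat.cast_sub h]
        ring
    · intro z hz
      rw [mem_ntup] at hz
      obtain ⟨k, hk, x, hx, rfl⟩ := hz
      have hx0 : 0 ≤ x := hS.2.2.1 x (idealPow_subset hS hE k hx)
      positivity
    · apply Set.Finite.subset (Set.finite_Ico 0 (max ((n : ℤ) * c + (n : ℤ) * b) 0))
      rintro z ⟨hz0, hz1⟩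
      refine ⟨hz0, ?_⟩
      by_contra h
      push_neg at h
      exact hz1 (hbig z (le_trans (le_max_left _ _) h))
  · ext x
    simp only [Set.mem_setOf_eq]
    constructor
    · intro hx
      refine ⟨hS.2.2.1 x hx, ?_⟩
      rw [mem_ntup]
      exact ⟨0, by omega, x, hx, by simp⟩
    · rintro ⟨hx0, hx⟩
      rw [mem_ntup] at hx
      obtain ⟨k, hk, y, hy, hxy⟩ := hx
      have hdvd : (n : ℤ) ∣ (k : ℤ) * b := ⟨x - y, by linarith⟩
      have hnk : (n : ℤ) ∣ (k : ℤ) := (hcop.symm).dvd_of_dvd_mul_right hdvd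
      have : n ∣ k := by exact_mod_cast hnk
      have hk0 : k = 0 := Nat.eq_zero_of_dvd_of_lt this hk
      subst hk0
      simp only [Nat.cast_zero, zero_mul, add_zero] at hxy
      have : x = y := mul_left_cancel₀ (ne_of_gt hn0) hxy
      rw [this]; exact hy
end
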